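/- The map (B₁,B₂,B₃) ↦ B₃B₂B₁ is a bijection (indeed a homeomorphism/analytic diffeomorphism) from the set Z of triples (B₁,B₂,B₃) ∈ S³ with tr B₂ ≠ 0 onto the set L of matrices [[a,b],[c,d]] ∈ SL(2,ℝ) with d ≠ 0. -/

import Mathlib

/-- The Schrödinger matrix `[[t,−1],[1,0]]`. -/
def schrodingerMat (t : ℝ) : Matrix (Fin 2) (Fin 2) ℝ := !![t, -1; 1, 0]

/-! The product `B₃B₂B₁` is `[[t₃(t₂t₁ - 1) - t₁, 1 - t₃t₂], [t₂t₁ - 1, -t₂]]`. Its bottom row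
determines `t₂` and then `t₁` as soon as `t₂ ≠ 0`, the top right entry then determines `t₃`, and the
top left entry is forced by `det = 1`. This gives an explicit inverse on `L`. -/

lemma schrodingerMat_mul_mul (t₁ t₂ t₃ : ℝ) :
    schrodingerMat t₃ * schrodingerMat t₂ * schrodingerMat t₁ =
      !![t₃ * (t₂ * t₁ - 1) - t₁, 1 - t₃ * t₂; t₂ * t₁ - 1, -t₂] := by
  simp only [schrodingerMat, Matrix.mul_fin_two]
  congr 1
  ring_nf

lemma det_schrodingerMat_mul_mul (t₁ t₂ t₃ : ℝ) :
    (schrodingerMat t₃ * schrodingerMat t₂ * schrodingerMat t₁).det = 1 := by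
  rw [schrodingerMat_mul_mul, Matrix.det_fin_two_of]
  ring

noncomputable def schrodingerParams (M : Matrix (Fin 2) (Fin 2) ℝ) : ℝ × ℝ × ℝ :=
  (-(M 1 0 + 1) / M 1 1, -M 1 1, (M 0 1 - 1) / M 1 1)

lemma schrodingerParams_schrodingerMat_mul_mul {t₁ t₂ t₃ : ℝ} (h₂ : t₂ ≠ 0) :
    schrodingerParams (schrodingerMat t₃ * schrodingerMat t₂ * schrodingerMat t₁) =
      (t₁, t₂, t₃) := by
  simp only [schrodingerParams, schrodingerMat_mul_mul, Matrix.of_apply, Matrix.cons_val',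
    Matrix.cons_val_zero, Matrix.cons_val_one, Matrix.cons_val_fin_one,
    Matrix.empty_val', neg_neg, Prod.mk.injEq, true_and]
  constructor <;> field_simp <;> ring

lemma schrodingerMat_mul_mul_schrodingerParams {M : Matrix (Fin 2) (Fin 2) ℝ} (hdet : M.det = 1)
    (hd : M 1 1 ≠ 0) :
    schrodingerMat (schrodingerParams M).2.2 * schrodingerMat (schrodingerParams M).2.1 *
      schrodingerMat (schrodingerParams M).1 = M := by
  rw [Matrix.det_fin_two] at hdet
  rw [schrodingerMat_mul_mul, schrodingerParams]
  conv_rhs => rw [Matrix.eta_fin_two M]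
  congr 1
  simp only [Matrix.vecCons_inj, and_true]
  refine ⟨⟨?_, ?_⟩, ?_, ?_⟩ <;> field_simp
  · linear_combination -hdet
  all_goals ring

/-- The map `(B₁,B₂,B₃) ↦ B₃B₂B₁` is a bijection from the set of triples of
Schrödinger matrices with `tr B₂ ≠ 0` (parametrized by `(t₁,t₂,t₃)` with `t₂ ≠ 0`)
onto the set `L` of matrices in `SL(2,ℝ)` whose lower-right entry is nonzero. -/
theorem schrodinger_triple_product_bijective :
    Set.BijOn (fun p : ℝ × ℝ × ℝ =>
        schrodingerMat p.2.2 * schrodingerMat p.2.1 * schrodingerMat p.1)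
      {p : ℝ × ℝ × ℝ | p.2.1 ≠ 0}
      {M : Matrix (Fin 2) (Fin 2) ℝ | M.det = 1 ∧ M 1 1 ≠ 0} := by
  refine Set.InvOn.bijOn (f' := schrodingerParams) ⟨?_, ?_⟩ ?_ ?_
  · rintro ⟨t₁, t₂, t₃⟩ h₂
    exact schrodingerParams_schrodingerMat_mul_mul h₂
  · rintro M ⟨hdet, hd⟩
    exact schrodingerMat_mul_mul_schrodingerParams hdet hd
  · rintro ⟨t₁, t₂, t₃⟩ h₂
    refine ⟨det_schrodingerMat_mul_mul t₁ t₂ t₃, ?_⟩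
    simpa [schrodingerMat_mul_mul] using h₂
  · rintro M ⟨-, hd⟩
    simpa [schrodingerParams] using hd
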